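/- For each $d \in \mathbb{Z}_{++}$, the set $S_d = \{(a,b) \in \R^2 : x^{2d} + ax^2 + b \ge 0 \; \forall x \in \R\}$ intersected with $\{b \ge 0\}$ admits the relative entropy representation $S_d \cap (\R \times \R_+) = \{(a,b) \in \R \times \R_+ : \exists \nu \in \R^2_+ \text{ s.t. } D(\nu, e(1,b)') \le a \text{ and } (d-1)\nu_1 = \nu_2\}$. -/

import Mathlib

/-!
Relative entropy is a convex conjugate: for `ν, λ ≥ 0` and every `u`,
`D(ν, λ) ≥ ⟨ν, u⟩ - ∑ λⱼ exp (uⱼ - 1)`. Taking `λ = e (1, b)` and `u = ((d - 1) τ, -τ)` with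
`τ = log x²`, the constraint `(d - 1) ν₁ = ν₂` kills `⟨ν, u⟩` and `D ≤ a` becomes
`x^(2d) + a x² + b ≥ 0`. Conversely, for `a < 0` put `c = d - 1`, `m = -a / d` and `ν = m (1, c)`:
then `D(ν, λ) = m log (c^c m^d / b^c) - d m`, and evaluating the polynomial at its critical point
`x² = m^(1/c)` (or letting `x → ∞` when `c = 0`) gives `c^c m^d ≤ b^c`, i.e. `D(ν, λ) ≤ a`.
-/

open Finset

noncomputable def relEnt {ℓ : ℕ} (ν lam : Fin ℓ → ℝ) : EReal :=
  ∑ j, if ν j = 0 then (0 : EReal) else if lam j = 0 then (⊤ : EReal)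
    else ((ν j * Real.log (ν j / lam j) : ℝ) : EReal)

open Real

theorem EReal.coe_finset_sum {ι : Type*} (s : Finset ι) (f : ι → ℝ) :
    ((∑ i ∈ s, f i : ℝ) : EReal) = ∑ i ∈ s, (f i : EReal) :=
  map_sum (⟨⟨(↑), EReal.coe_zero⟩, EReal.coe_add⟩ : ℝ →+ EReal) f s

theorem mul_sub_mul_exp_le_mul_log {ν lam : ℝ} (hν : 0 ≤ ν) (hlam : 0 < lam) (u : ℝ) :
    ν * u - lam * exp (u - 1) ≤ ν * log (ν / lam) := by
  rcases hν.eq_or_lt with rfl | hν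
  · simp only [zero_mul, zero_sub, neg_nonpos]
    positivity
  · have hexp : lam * exp (u - 1) = ν * exp (u - 1 - log (ν / lam)) := by
      rw [exp_sub (u - 1), exp_log (by positivity)]
      field_simp
    rw [hexp]
    nlinarith [mul_le_mul_of_nonneg_left (add_one_le_exp (u - 1 - log (ν / lam))) hν.le]

theorem relEnt_eq_coe_sum {ℓ : ℕ} {ν lam : Fin ℓ → ℝ} (h : ∀ j, lam j = 0 → ν j = 0) :
    relEnt ν lam = ((∑ j, ν j * log (ν j / lam j) : ℝ) : EReal) := by
  rw [relEnt, EReal.coe_finset_sum]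
  refine Finset.sum_congr rfl fun j _ => ?_
  by_cases hν : ν j = 0
  · simp [hν]
  · simp [hν, mt (h j) hν]

theorem coe_sum_sub_le_relEnt {ℓ : ℕ} {ν lam : Fin ℓ → ℝ} (hν : ∀ j, 0 ≤ ν j)
    (hlam : ∀ j, 0 ≤ lam j) (u : Fin ℓ → ℝ) :
    ((∑ j, (ν j * u j - lam j * exp (u j - 1)) : ℝ) : EReal) ≤ relEnt ν lam := by
  rw [relEnt, EReal.coe_finset_sum]
  refine Finset.sum_le_sum fun j _ => ?_
  by_cases hνj : ν j = 0
  · simp only [hνj, if_true, zero_mul, zero_sub, EReal.coe_nonpos, neg_nonpos]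
    exact mul_nonneg (hlam j) (exp_pos _).le
  by_cases hlamj : lam j = 0
  · simp [hνj, hlamj]
  · simp only [hνj, hlamj, if_false, EReal.coe_le_coe_iff]
    exact mul_sub_mul_exp_le_mul_log (hν j) ((hlam j).lt_of_ne' hlamj) (u j)

theorem pow_add_mul_add_nonneg_of_relEnt_le (d : ℕ) {a b : ℝ} (hb : 0 ≤ b) {ν : Fin 2 → ℝ}
    (hν : ∀ i, 0 ≤ ν i) (hD : relEnt ν (fun i => exp 1 * (if i = 0 then 1 else b)) ≤ (a : EReal))
    (hlin : ((d : ℝ) - 1) * ν 0 = ν 1) {t : ℝ} (ht : 0 < t) :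
    0 ≤ t ^ d + a * t + b := by
  have hlam : ∀ i : Fin 2, 0 ≤ exp 1 * (if i = 0 then 1 else b) := fun i => by
    split_ifs <;> positivity
  have h := EReal.coe_le_coe_iff.mp
    ((coe_sum_sub_le_relEnt hν hlam ![((d : ℝ) - 1) * log t, -log t]).trans hD)
  have h0 : exp (((d : ℝ) - 1) * log t - 1) = t ^ d / t / exp 1 := by
    rw [sub_mul, one_mul, exp_sub, exp_sub, exp_nat_mul, exp_log ht]
  have h1 : exp (-log t - 1) = 1 / t / exp 1 := by
    rw [exp_sub, exp_neg, exp_log ht, one_div]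
  simp only [Fin.sum_univ_two, Matrix.cons_val_zero, Matrix.cons_val_one, if_true,
    Fin.one_eq_zero_iff, OfNat.ofNat_ne_one, if_false, h0, h1] at h
  have hcancel : ν 0 * (((d : ℝ) - 1) * log t) + ν 1 * -log t = 0 := by
    rw [← hlin]; ring
  have : -(t ^ d + b) / t ≤ a := by
    convert h using 1
    field_simp
    linear_combination (-t) * hcancel
  rw [div_le_iff₀ ht] at this
  linarith

theorem pow_mul_pow_le_pow_of_forall_nonneg (c : ℕ) {m b : ℝ} (hm : 0 < m)
    (h : ∀ t, 0 ≤ t → 0 ≤ t ^ (c + 1) - (c + 1) * m * t + b) :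
    (c : ℝ) ^ c * m ^ (c + 1) ≤ b ^ c := by
  rcases c.eq_zero_or_pos with rfl | hc
  · by_contra! hm1
    simp only [pow_zero, CharP.cast_eq_zero, zero_add, pow_one, one_mul] at hm1
    have hb : 0 ≤ b := by simpa using h 0 le_rfl
    have hneg := h ((b + 1) / (m - 1)) (by apply div_nonneg <;> linarith)
    have hcancel : (m - 1) * ((b + 1) / (m - 1)) = b + 1 := mul_div_cancel₀ _ (by linarith)
    simp only [zero_add, pow_one, CharP.cast_eq_zero, one_mul] at hneg
    linarith
  · -- evaluate at the critical point `t = m ^ (1 / c)` of `t ^ (c + 1) - (c + 1) * m * t`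
    set t := m ^ ((c : ℝ)⁻¹)
    have htc : t ^ c = m := rpow_inv_natCast_pow hm.le hc.ne'
    have ht : 0 < t := rpow_pos_of_pos hm _
    have hcmt : c * m * t ≤ b := by
      have := h t ht.le
      rw [pow_succ, htc] at this
      linarith
    calc (c : ℝ) ^ c * m ^ (c + 1) = (c * m * t) ^ c := by
          rw [mul_pow, mul_pow, htc, pow_succ]; ring
      _ ≤ b ^ c := pow_le_pow_left₀ (by positivity) hcmt c

theorem relEnt_le_of_pow_mul_pow_le (c : ℕ) {m b : ℝ} (hm : 0 < m) (hb : 0 ≤ b)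
    (h : (c : ℝ) ^ c * m ^ (c + 1) ≤ b ^ c) :
    relEnt ![m, c * m] (fun i => exp 1 * (if i = 0 then 1 else b)) ≤
      ((-((c + 1) * m) : ℝ) : EReal) := by
  have hb_pos : 0 < c → 0 < b := fun hc => hb.lt_of_ne' fun hb0 => by
    rw [hb0, zero_pow hc.ne'] at h
    exact h.not_gt (by positivity)
  have hsupp : ∀ j, exp 1 * (if j = 0 then 1 else b) = 0 → ![m, c * m] j = 0 := by
    simp only [Fin.forall_fin_two, Matrix.cons_val_zero, Matrix.cons_val_one, if_true,
      if_false, mul_eq_zero, (exp_pos 1).ne', one_ne_zero, false_or, false_imp_iff, true_and]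
    intro hb0
    left
    by_contra hc
    exact (hb_pos (Nat.pos_of_ne_zero (by exact_mod_cast hc))).ne' hb0
  rw [relEnt_eq_coe_sum hsupp, EReal.coe_le_coe_iff]
  simp only [Fin.sum_univ_two, Matrix.cons_val_zero, Matrix.cons_val_one, if_true,
    Fin.one_eq_zero_iff, OfNat.ofNat_ne_one, if_false, mul_one]
  have hval : m * log (m / exp 1) + c * m * log (c * m / (exp 1 * b)) =
      m * log ((c : ℝ) ^ c * m ^ (c + 1) / b ^ c) - (c + 1) * m := by
    have h1 : log (m / exp 1) = log m - 1 := by rw [log_div hm.ne' (exp_pos 1).ne', log_exp]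
    rcases c.eq_zero_or_pos with rfl | hc
    · simp only [h1, CharP.cast_eq_zero, zero_mul, zero_div, log_zero, mul_zero, add_zero,
        pow_zero, zero_add, pow_one, one_mul, div_one]
      ring
    have hb := hb_pos hc
    have h2 : log (c * m / (exp 1 * b)) = log c + log m - 1 - log b := by
      rw [log_div (by positivity) (by positivity), log_mul (by positivity) hm.ne',
        log_mul (exp_pos 1).ne' hb.ne', log_exp]
      ring
    have h3 : log ((c : ℝ) ^ c * m ^ (c + 1) / b ^ c) = c * log c + (c + 1) * log m - c * log b := by
      rw [log_div (by positivity) (by positivity), log_mul (by positivity) (by positivity),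
        log_pow, log_pow, log_pow]
      push_cast
      ring
    rw [h1, h2, h3]
    ring
  rw [hval]
  have : log ((c : ℝ) ^ c * m ^ (c + 1) / b ^ c) ≤ 0 :=
    log_nonpos (by positivity) (div_le_one_of_le₀ h (by positivity))
  nlinarith

theorem exists_relEnt_le_of_forall_nonneg (c : ℕ) {a b : ℝ} (hb : 0 ≤ b)
    (h : ∀ t, 0 ≤ t → 0 ≤ t ^ (c + 1) + a * t + b) :
    ∃ ν : Fin 2 → ℝ, (∀ i, 0 ≤ ν i) ∧
      relEnt ν (fun i => exp 1 * (if i = 0 then 1 else b)) ≤ (a : EReal) ∧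
      (((c + 1 : ℕ) : ℝ) - 1) * ν 0 = ν 1 := by
  rcases le_or_gt 0 a with ha | ha
  · exact ⟨0, fun _ => le_rfl, by simpa [relEnt] using ha, by simp⟩
  obtain ⟨m, hm, rfl⟩ : ∃ m : ℝ, 0 < m ∧ a = -((c + 1) * m) :=
    ⟨-a / (c + 1), div_pos (neg_pos.mpr ha) (by positivity), by field_simp⟩
  refine ⟨![m, c * m], ?_, ?_, by simp⟩
  · simp only [Fin.forall_fin_two, Matrix.cons_val_zero, Matrix.cons_val_one]
    exact ⟨hm.le, by positivity⟩
  · refine relEnt_le_of_pow_mul_pow_le c hm hb (pow_mul_pow_le_pow_of_forall_nonneg c hm ?_)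
    intro t ht
    linarith [h t ht]

theorem forall_sq_iff_forall_nonneg {P : ℝ → Prop} : (∀ x : ℝ, P (x ^ 2)) ↔ ∀ t, 0 ≤ t → P t :=
  ⟨fun h t ht => by simpa [sq_sqrt ht] using h √t, fun h x => h _ (sq_nonneg x)⟩

theorem stmt13 (d : ℕ) (hd : 1 ≤ d) :
    {p : ℝ × ℝ | ∀ x : ℝ, 0 ≤ x ^ (2 * d) + p.1 * x ^ 2 + p.2} ∩
      {p : ℝ × ℝ | 0 ≤ p.2} =
    {p : ℝ × ℝ | 0 ≤ p.2 ∧ ∃ ν : Fin 2 → ℝ, (∀ i, 0 ≤ ν i) ∧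
      relEnt ν (fun i => Real.exp 1 * (if i = 0 then 1 else p.2)) ≤ (p.1 : EReal) ∧
      ((d : ℝ) - 1) * ν 0 = ν 1} := by
  obtain ⟨c, rfl⟩ := Nat.exists_eq_add_of_le' hd
  ext ⟨a, b⟩
  simp only [Set.mem_inter_iff, Set.mem_ofPred_eq, pow_mul,
    forall_sq_iff_forall_nonneg (P := fun t => 0 ≤ t ^ (c + 1) + a * t + b)]
  constructor
  · rintro ⟨h, hb⟩
    exact ⟨hb, exists_relEnt_le_of_forall_nonneg c hb h⟩
  · rintro ⟨hb, ν, hν, hD, hlin⟩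
    refine ⟨fun t ht => ?_, hb⟩
    rcases ht.eq_or_lt with rfl | ht
    · simpa using hb
    · exact pow_add_mul_add_nonneg_of_relEnt_le _ hb hν hD hlin ht
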